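/- For every positive integer n and every real number α, the n×n Hankel determinant det(α·c_{i+j+1} + c_{i+j+2})_{i,j=0}^{n−1} equals (Σ_{j=0}^{n} g_{2j}(α)·g_{2j}(0)·∏_{ℓ=2j}^{2n−1} T_ℓ) · det(c_{i+j})_{i,j=0}^{n−1}. -/

import Mathlib

/-!
Splitting a path at time `a` gives `c(a + b, 0) = ∑ₖ c(a, k) c(b, k) πₖ` with
`πₖ = T₀ ⋯ Tₖ₋₁`, because the transfer operator `c(n, ·) ↦ c(n + 1, ·)` is self-adjoint for the
weights `πₖ`. Restricted to even resp. odd heights this factors the Hankel matrix as `L D Lᵀ` and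
the shifted one as `L' D' Qᵀ`, with `L, L'` unitriangular and
`Q_{jm} = α c(2j+1, 2m+1) + c(2j+3, 2m+1)`. The matrix `Q` is lower Hessenberg with unit
superdiagonal, and `uₖ = (-1)^⌊k/2⌋ gₖ(α)` is an eigenvector of the transposed transfer operator
(eigenvalue `1` at even, `-α` at odd heights), so `∑ₖ c(m, k) uₖ = (-α)^⌊m/2⌋`. Hence `Q` maps
`(u_{2m+1})ₘ` to a multiple of the last unit vector, which gives `det Q = g_{2n+1}(α)`. Finally
`∏ π_{2m+1} / π_{2m} = g_{2n}(0)`, and the sum in the statement telescopes to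
`g_{2n+1}(α) g_{2n}(0)`.
-/

/-- `dyckGF T n k` is the weighted Dyck path generating function `c(n,k)`:
`c(0,k) = [k = 0]`, `c(n,k) = 0` for `k < 0`, and
`c(n,k) = c(n-1,k-1) + T_k c(n-1,k+1)` for `n ≥ 1`, `k ≥ 0`. -/
def dyckGF (T : ℕ → ℝ) : ℕ → ℤ → ℝ
  | 0, k => if k = 0 then 1 else 0
  | n+1, k =>
      if k < 0 then 0
      else dyckGF T n (k-1) + T k.toNat * dyckGF T n (k+1)

/-- The polynomials `g_n(α)`: `g_0 = 1`, `g_1 = 1`,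
`g_{2n}(α) = α g_{2n-1}(α) + T_{2n-2} g_{2n-2}(α)` and
`g_{2n+1}(α) = g_{2n}(α) + T_{2n-1} g_{2n-1}(α)` for `n ≥ 1`. -/
def gpoly (T : ℕ → ℝ) (α : ℝ) : ℕ → ℝ
  | 0 => 1
  | 1 => 1
  | n+2 => (if (n+2) % 2 = 0 then α else 1) * gpoly T α (n+1) + T n * gpoly T α n

open Finset

open Matrix in
lemma Matrix.det_eq_of_mulVec_eq_pi_single {R : Type*} [CommRing R] {N : ℕ}
    (A : Matrix (Fin (N + 1)) (Fin (N + 1)) R) {v : Fin (N + 1) → R} (hv : v 0 = 1) {c : R}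
    (hAv : A *ᵥ v = Pi.single (Fin.last N) c) :
    A.det = (-1) ^ N * c * (A.submatrix Fin.castSucc Fin.succ).det := by
  have h_col : (fun k => ∑ i, v i • A k i) = Pi.single (Fin.last N) c := by
    rw [← hAv]
    ext k
    simp [mulVec, dotProduct, mul_comm]
  have h_update := det_updateCol_sum A 0 v
  rw [hv, one_smul, h_col] at h_update
  rw [← h_update, det_succ_column _ 0, Fintype.sum_eq_single (Fin.last N) fun i hi => by simp [hi],
    submatrix_updateCol_succAbove, Fin.succAbove_last, Fin.succAbove_zero]
  simp

def dyckWeight (T : ℕ → ℝ) (k : ℕ) : ℝ := ∏ ℓ ∈ range k, T ℓ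

/-- The transpose `(Aᵀu)(k) = u(k+1) + T_{k-1} u(k-1)` of the transfer operator
`(Ac)(k) = c(k-1) + T_k c(k+1)`. -/
def transferAdj (T : ℕ → ℝ) (u : ℕ → ℝ) : ℕ → ℝ
  | 0 => u 1
  | k + 1 => u (k + 2) + T k * u k

def signedGpoly (T : ℕ → ℝ) (α : ℝ) (k : ℕ) : ℝ := (-1) ^ (k / 2) * gpoly T α k

def dyckMatrix (T : ℕ → ℝ) (r n : ℕ) : Matrix (Fin n) (Fin n) ℝ :=
  Matrix.of fun i m => dyckGF T (2 * i + r) (2 * m + r : ℕ)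

def shiftedDyckMatrix (T : ℕ → ℝ) (α : ℝ) (n : ℕ) : Matrix (Fin n) (Fin n) ℝ :=
  Matrix.of fun j m =>
    α * dyckGF T (2 * j + 1) (2 * m + 1 : ℕ) + dyckGF T (2 * j + 3) (2 * m + 1 : ℕ)

section

open Matrix

variable {T : ℕ → ℝ} {α : ℝ}

lemma dyckGF_of_neg : ∀ {m : ℕ} {k : ℤ}, k < 0 → dyckGF T m k = 0
  | 0, k, h => by simp [dyckGF]; omega
  | m + 1, k, h => by simp [dyckGF, h]

lemma dyckGF_of_lt : ∀ {m : ℕ} {k : ℤ}, (m : ℤ) < k → dyckGF T m k = 0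
  | 0, k, h => by simp [dyckGF]; omega
  | m + 1, k, h => by
    rw [dyckGF, if_neg (by omega), dyckGF_of_lt (by omega), dyckGF_of_lt (by omega)]
    ring

lemma dyckGF_of_odd : ∀ {m : ℕ} {k : ℤ}, Odd ((m : ℤ) + k) → dyckGF T m k = 0
  | 0, k, h => by
    have : k ≠ 0 := by rintro rfl; simp at h
    simp [dyckGF, this]
  | m + 1, k, h => by
    rcases lt_or_ge k 0 with hk | hk
    · exact dyckGF_of_neg hk
    obtain ⟨t, ht⟩ := h
    push_cast at ht
    rw [dyckGF, if_neg (by omega), dyckGF_of_odd ⟨t - 1, by omega⟩,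
      dyckGF_of_odd ⟨t, by omega⟩]
    ring

lemma dyckGF_self : ∀ m : ℕ, dyckGF T m m = 1
  | 0 => by simp [dyckGF]
  | m + 1 => by
    rw [dyckGF, if_neg (by omega), dyckGF_of_lt (k := (m + 1 : ℕ) + 1) (by push_cast; omega)]
    simpa using dyckGF_self m

lemma dyckGF_succ_natCast (m k : ℕ) :
    dyckGF T (m + 1) k = dyckGF T m (k - 1 : ℤ) + T k * dyckGF T m (k + 1 : ℕ) := by
  rw [dyckGF, if_neg (by omega)]
  simp

lemma sum_dyckGF_succ_mul (u : ℕ → ℝ) {m M : ℕ} (hm : m < M) :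
    ∑ k ∈ range (M + 1), dyckGF T (m + 1) k * u k
      = ∑ k ∈ range (M + 1), dyckGF T m k * transferAdj T u k := by
  obtain ⟨M, rfl⟩ : ∃ M', M = M' + 1 := ⟨M - 1, by omega⟩
  have h_top : dyckGF T m (M + 1 : ℕ) = 0 := dyckGF_of_lt (by push_cast; omega)
  have h_down : ∑ k ∈ range (M + 2), dyckGF T m (k - 1 : ℤ) * u k
      = ∑ k ∈ range (M + 1), dyckGF T m (k + 1 : ℕ) * u (k + 2) + dyckGF T m 0 * u 1 := by
    rw [sum_range_succ', sum_range_succ', sum_range_succ _ M, h_top]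
    push_cast
    simp [dyckGF_of_neg, mul_comm]
  have h_up : ∑ k ∈ range (M + 2), T k * dyckGF T m (k + 1 : ℕ) * u k
      = ∑ k ∈ range (M + 1), dyckGF T m (k + 1 : ℕ) * (T k * u k) := by
    rw [sum_range_succ _ (M + 1), dyckGF_of_lt (k := (M + 1 + 1 : ℕ)) (by push_cast; omega),
      mul_zero, zero_mul, add_zero]
    exact sum_congr rfl fun k _ => by ring
  conv_rhs => rw [sum_range_succ']
  simp_rw [dyckGF_succ_natCast, add_mul, sum_add_distrib, h_down, h_up]
  simp only [transferAdj, mul_add, sum_add_distrib]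
  rw [Nat.cast_zero]
  ring

lemma transferAdj_dyckGF_mul_dyckWeight (m : ℕ) :
    transferAdj T (fun k : ℕ => dyckGF T m k * dyckWeight T k)
      = fun k : ℕ => dyckGF T (m + 1) k * dyckWeight T k := by
  funext k
  cases k with
  | zero =>
    have h := dyckGF_succ_natCast (T := T) m 0
    simp only [Nat.cast_zero, zero_sub, dyckGF_of_neg (show (-1 : ℤ) < 0 by norm_num)] at h
    simp [transferAdj, dyckWeight, h, mul_comm]
  | succ k =>
    simp only [transferAdj, dyckGF_succ_natCast, dyckWeight, prod_range_succ]
    push_cast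
    rw [add_sub_cancel_right, add_assoc, one_add_one_eq_two]
    ring

lemma sum_dyckGF_mul_dyckGF_mul_dyckWeight : ∀ {m m' M : ℕ}, m + m' ≤ M →
    ∑ k ∈ range (M + 1), dyckGF T m k * (dyckGF T m' k * dyckWeight T k) = dyckGF T (m + m') 0
  | 0, m', M, _ => by
    rw [sum_eq_single 0 (fun k _ hk => by simp [dyckGF, hk]) (by simp)]
    simp [dyckGF, dyckWeight]
  | m + 1, m', M, h => by
    rw [sum_dyckGF_succ_mul _ (by omega), transferAdj_dyckGF_mul_dyckWeight,
      sum_dyckGF_mul_dyckGF_mul_dyckWeight (by omega), show m + 1 + m' = m + (m' + 1) by omega]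

lemma le_and_even_of_dyckGF_ne_zero {a k : ℕ} (h : dyckGF T a k ≠ 0) : k ≤ a ∧ Even (a + k) := by
  refine ⟨?_, ?_⟩
  · by_contra hk
    exact h (dyckGF_of_lt (by omega))
  · by_contra hk
    exact h (dyckGF_of_odd (by exact_mod_cast Nat.not_even_iff_odd.mp hk))

lemma sum_range_dyckGF_mul_eq_sum_fin (w : ℕ → ℝ) {a r n M : ℕ} (hr : r < 2)
    (hpar : Even (a + r)) (ha : a < 2 * n + r) (hM : a ≤ M) :
    ∑ k ∈ range (M + 1), dyckGF T a k * w k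
      = ∑ m : Fin n, dyckGF T a (2 * m + r : ℕ) * w (2 * m + r) := by
  set f : ℕ → ℝ := fun k => dyckGF T a k * w k
  set S := range (M + 1) ∩ (range n).image (2 * · + r)
  have h_support : ∀ k, k ∉ S → f k = 0 := by
    intro k hk
    by_contra hfk
    obtain ⟨hka, hkpar⟩ := le_and_even_of_dyckGF_ne_zero (left_ne_zero_of_mul hfk)
    rw [Nat.even_iff] at hpar hkpar
    simp only [S, mem_inter, mem_range, mem_image, not_and, not_exists] at hk
    exact hk (by omega) (k / 2) (by omega) (by omega)
  rw [Fin.sum_univ_eq_sum_range (fun m => f (2 * m + r)),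
    ← sum_image (fun x _ y _ h => by simpa using h),
    ← sum_subset inter_subset_left fun k _ hk => h_support k hk,
    ← sum_subset inter_subset_right fun k _ hk => h_support k hk]

lemma gpoly_even_succ (k : ℕ) :
    gpoly T α (2 * k + 2) = α * gpoly T α (2 * k + 1) + T (2 * k) * gpoly T α (2 * k) := by
  rw [gpoly, if_pos (by omega)]

lemma gpoly_odd_succ (k : ℕ) :
    gpoly T α (2 * k + 3) = gpoly T α (2 * k + 2) + T (2 * k + 1) * gpoly T α (2 * k + 1) := by
  rw [gpoly, if_neg (by omega), one_mul]

lemma gpoly_zero_even (k : ℕ) : gpoly T 0 (2 * k) = ∏ m ∈ range k, T (2 * m) := by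
  induction k with
  | zero => rfl
  | succ k ih => rw [mul_add_one, gpoly_even_succ, ih, prod_range_succ]; ring

lemma transferAdj_signedGpoly (k : ℕ) :
    transferAdj T (signedGpoly T α) k = (if Even k then 1 else -α) * signedGpoly T α k := by
  obtain ⟨i, rfl | rfl⟩ := Nat.even_or_odd' k
  · cases i with
    | zero => simp [transferAdj, signedGpoly, gpoly]
    | succ i =>
      have h_odd := gpoly_odd_succ (T := T) (α := α) i
      have h_even : Even (2 * i + 2) := ⟨i + 1, by ring⟩
      simp only [transferAdj, signedGpoly, mul_add_one, show 2 * i + 1 + 2 = 2 * i + 3 by ring,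
        if_pos h_even]
      rw [show (2 * i + 3) / 2 = i + 1 by omega, show (2 * i + 1) / 2 = i by omega,
        show (2 * i + 2) / 2 = i + 1 by omega, h_odd]
      ring
  · simp only [transferAdj, signedGpoly, if_neg (Nat.not_even_two_mul_add_one i)]
    rw [show (2 * i + 2) / 2 = i + 1 by omega, show (2 * i + 1) / 2 = i by omega,
      show 2 * i / 2 = i by omega, gpoly_even_succ]
    ring

lemma sum_dyckGF_mul_signedGpoly : ∀ {m M : ℕ}, m ≤ M →
    ∑ k ∈ range (M + 1), dyckGF T m k * signedGpoly T α k = (-α) ^ (m / 2)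
  | 0, M, _ => by
    rw [sum_eq_single 0 (fun k _ hk => by simp [dyckGF, hk]) (by simp)]
    simp [dyckGF, signedGpoly, gpoly]
  | m + 1, M, h => by
    have h_parity : ∀ k : ℕ, dyckGF T m k * transferAdj T (signedGpoly T α) k
        = (if Even m then 1 else -α) * (dyckGF T m k * signedGpoly T α k) := by
      intro k
      rw [transferAdj_signedGpoly]
      by_cases hk : dyckGF T m k = 0
      · simp [hk]
      · have h_even := (le_and_even_of_dyckGF_ne_zero hk).2
        rw [Nat.even_add] at h_even
        simp only [← h_even]
        ring
    rw [sum_dyckGF_succ_mul _ (by omega), sum_congr rfl fun k _ => h_parity k, ← mul_sum,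
      sum_dyckGF_mul_signedGpoly (by omega)]
    obtain ⟨t, rfl | rfl⟩ := Nat.even_or_odd' m
    · rw [if_pos (even_two_mul t), show (2 * t + 1) / 2 = 2 * t / 2 by omega, one_mul]
    · rw [if_neg (Nat.not_even_two_mul_add_one t),
        show (2 * t + 1 + 1) / 2 = (2 * t + 1) / 2 + 1 by omega, pow_succ]
      ring

lemma det_dyckMatrix (r n : ℕ) : (dyckMatrix T r n).det = 1 := by
  rw [det_of_isLowerTriangular (dyckMatrix T r n) fun i m (him : i < m) =>
    dyckGF_of_lt (by simp; omega)]
  exact prod_eq_one fun i _ => dyckGF_self _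

lemma hankel_eq_dyckMatrix_mul (n : ℕ) :
    (of fun i j : Fin n => dyckGF T (2 * ((i : ℕ) + (j : ℕ))) 0)
      = dyckMatrix T 0 n * diagonal (fun m : Fin n => dyckWeight T (2 * m))
          * (dyckMatrix T 0 n)ᵀ := by
  ext i j
  have h_gram := sum_dyckGF_mul_dyckGF_mul_dyckWeight (T := T) (m := 2 * i) (m' := 2 * j) le_rfl
  rw [sum_range_dyckGF_mul_eq_sum_fin _ (r := 0) (n := n) (by norm_num) (by simp) (by omega)
    (by omega)] at h_gram
  rw [mul_apply, of_apply, mul_add, ← h_gram]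
  simp only [mul_diagonal, transpose_apply, dyckMatrix, of_apply, add_zero]
  exact sum_congr rfl fun m _ => by ring

lemma shiftedHankel_eq_dyckMatrix_mul (n : ℕ) :
    (of fun i j : Fin n =>
        α * dyckGF T (2 * ((i : ℕ) + (j : ℕ) + 1)) 0 + dyckGF T (2 * ((i : ℕ) + (j : ℕ) + 2)) 0)
      = dyckMatrix T 1 n * diagonal (fun m : Fin n => dyckWeight T (2 * m + 1))
          * (shiftedDyckMatrix T α n)ᵀ := by
  ext i j
  have h_gram₁ := sum_dyckGF_mul_dyckGF_mul_dyckWeight (T := T) (m := 2 * i + 1) (m' := 2 * j + 1)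
    (M := 2 * i + 2 * j + 4) (by omega)
  have h_gram₂ := sum_dyckGF_mul_dyckGF_mul_dyckWeight (T := T) (m := 2 * i + 1) (m' := 2 * j + 3)
    (M := 2 * i + 2 * j + 4) (by omega)
  have h_sum :
      α * dyckGF T (2 * ((i : ℕ) + (j : ℕ) + 1)) 0 + dyckGF T (2 * ((i : ℕ) + (j : ℕ) + 2)) 0
        = ∑ k ∈ range (2 * i + 2 * j + 4 + 1), dyckGF T (2 * i + 1) k
          * (dyckWeight T k * (α * dyckGF T (2 * j + 1) k + dyckGF T (2 * j + 3) k)) := by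
    rw [show 2 * ((i : ℕ) + j + 1) = 2 * i + 1 + (2 * j + 1) by ring,
      show 2 * ((i : ℕ) + j + 2) = 2 * i + 1 + (2 * j + 3) by ring, ← h_gram₁, ← h_gram₂, mul_sum,
      ← sum_add_distrib]
    exact sum_congr rfl fun k _ => by ring
  rw [sum_range_dyckGF_mul_eq_sum_fin _ (r := 1) (n := n) (by norm_num) (by simp [parity_simps])
    (by omega) (by omega)] at h_sum
  rw [mul_apply, of_apply, h_sum]
  simp only [mul_diagonal, transpose_apply, dyckMatrix, shiftedDyckMatrix, of_apply]
  exact sum_congr rfl fun m _ => by ring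

lemma shiftedDyckMatrix_mulVec_signedGpoly (n : ℕ) :
    shiftedDyckMatrix T α n *ᵥ (fun m => signedGpoly T α (2 * m + 1))
      = fun j : Fin n => -(dyckGF T (2 * j + 3) (2 * n + 1 : ℕ) * signedGpoly T α (2 * n + 1)) := by
  ext j
  have h₁ := sum_dyckGF_mul_signedGpoly (T := T) (α := α) (m := 2 * j + 1) le_rfl
  rw [sum_range_dyckGF_mul_eq_sum_fin _ (r := 1) (n := n) (by norm_num) (by simp [parity_simps])
    (by omega) le_rfl] at h₁
  have h₂ := sum_dyckGF_mul_signedGpoly (T := T) (α := α) (m := 2 * j + 3) le_rfl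
  rw [sum_range_dyckGF_mul_eq_sum_fin _ (r := 1) (n := n + 1) (by norm_num) (by simp [parity_simps])
    (by omega) le_rfl, Fin.sum_univ_castSucc] at h₂
  simp only [Fin.val_castSucc, Fin.val_last] at h₂
  rw [show (2 * j + 1) / 2 = (j : ℕ) by omega] at h₁
  rw [show (2 * j + 3) / 2 = (j : ℕ) + 1 by omega] at h₂
  simp only [mulVec, dotProduct, shiftedDyckMatrix, of_apply, add_mul, sum_add_distrib, mul_assoc,
    ← mul_sum]
  linear_combination α * h₁ + h₂

lemma det_shiftedDyckMatrix (n : ℕ) : (shiftedDyckMatrix T α n).det = gpoly T α (2 * n + 1) := by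
  cases n with
  | zero => simp [gpoly]
  | succ N =>
    have h_minor : ((shiftedDyckMatrix T α (N + 1)).submatrix Fin.castSucc Fin.succ).det = 1 := by
      rw [det_of_isLowerTriangular _ fun i k (hik : i < k) => ?_]
      · refine prod_eq_one fun i _ => ?_
        simp only [submatrix_apply, shiftedDyckMatrix, of_apply, Fin.val_castSucc, Fin.val_succ]
        rw [dyckGF_of_lt (by push_cast; omega), show 2 * ((i : ℕ) + 1) + 1 = 2 * i + 3 by ring,
          dyckGF_self]
        ring
      · simp only [submatrix_apply, shiftedDyckMatrix, of_apply, Fin.val_castSucc, Fin.val_succ]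
        rw [dyckGF_of_lt (by push_cast; omega), dyckGF_of_lt (by push_cast; omega)]
        ring
    have h_mulVec : shiftedDyckMatrix T α (N + 1) *ᵥ (fun m => signedGpoly T α (2 * m + 1))
        = Pi.single (Fin.last N) ((-1) ^ N * gpoly T α (2 * N + 3)) := by
      rw [shiftedDyckMatrix_mulVec_signedGpoly]
      ext j
      rcases (Fin.le_last j).lt_or_eq with hj | rfl
      · rw [dyckGF_of_lt (by push_cast; omega), Pi.single_eq_of_ne hj.ne]
        ring
      · rw [Pi.single_eq_same, Fin.val_last, show 2 * (N + 1) + 1 = 2 * N + 3 by ring, dyckGF_self,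
          signedGpoly, show (2 * N + 3) / 2 = N + 1 by omega]
        ring
    have h_sign : ((-1 : ℝ) ^ N) * (-1) ^ N = 1 := by rw [← mul_pow]; simp
    rw [det_eq_of_mulVec_eq_pi_single _ (by simp [signedGpoly, gpoly]) h_mulVec, h_minor,
      show 2 * (N + 1) + 1 = 2 * N + 3 by ring]
    linear_combination gpoly T α (2 * N + 3) * h_sign

lemma sum_gpoly_mul_gpoly_zero_mul_prod (n : ℕ) :
    ∑ j ∈ range (n + 1), gpoly T α (2 * j) * gpoly T 0 (2 * j) * ∏ ℓ ∈ Ico (2 * j) (2 * n), T ℓ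
      = gpoly T α (2 * n + 1) * gpoly T 0 (2 * n) := by
  induction n with
  | zero => simp [gpoly]
  | succ n ih =>
    have h_prod : ∀ j ∈ range (n + 1), ∏ ℓ ∈ Ico (2 * j) (2 * (n + 1)), T ℓ
        = (∏ ℓ ∈ Ico (2 * j) (2 * n), T ℓ) * (T (2 * n) * T (2 * n + 1)) := fun j hj => by
      rw [mem_range] at hj
      rw [show 2 * (n + 1) = 2 * n + 1 + 1 by ring, prod_Ico_succ_top (by omega),
        prod_Ico_succ_top (by omega), mul_assoc]
    rw [sum_range_succ, sum_congr rfl fun j hj => by rw [h_prod j hj, ← mul_assoc], ← sum_mul, ih,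
      Ico_self, prod_empty, mul_one, show 2 * (n + 1) + 1 = 2 * n + 3 by ring, gpoly_odd_succ,
      mul_add_one, gpoly_even_succ (α := 0)]
    ring

lemma prod_dyckWeight_odd (n : ℕ) :
    ∏ m : Fin n, dyckWeight T (2 * m + 1)
      = (∏ m : Fin n, dyckWeight T (2 * m)) * ∏ m ∈ range n, T (2 * m) := by
  rw [Fin.prod_univ_eq_prod_range (fun m => dyckWeight T (2 * m + 1)),
    Fin.prod_univ_eq_prod_range (fun m => dyckWeight T (2 * m)), ← prod_mul_distrib]
  exact prod_congr rfl fun m _ => prod_range_succ _ _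

end

theorem hankel_shifted_two_term_dyck_even_general (T : ℕ → ℝ)
    (n : ℕ) (α : ℝ) :
    Matrix.det (Matrix.of fun i j : Fin n =>
        α * dyckGF T (2 * ((i : ℕ) + (j : ℕ) + 1)) 0
          + dyckGF T (2 * ((i : ℕ) + (j : ℕ) + 2)) 0)
      = (∑ j ∈ Finset.range (n + 1),
            gpoly T α (2 * j) * gpoly T 0 (2 * j) * ∏ ℓ ∈ Finset.Ico (2 * j) (2 * n), T ℓ)
        * Matrix.det (Matrix.of fun i j : Fin n =>
            dyckGF T (2 * ((i : ℕ) + (j : ℕ))) 0) := by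
  rw [shiftedHankel_eq_dyckMatrix_mul, hankel_eq_dyckMatrix_mul]
  simp only [Matrix.det_mul, Matrix.det_transpose, Matrix.det_diagonal, det_dyckMatrix,
    det_shiftedDyckMatrix]
  rw [sum_gpoly_mul_gpoly_zero_mul_prod, gpoly_zero_even, prod_dyckWeight_odd]
  ring

/-- Eq. (3.3): for `n ≥ 1` and real `α`,
`det(α c_{i+j+1} + c_{i+j+2})_{i,j=0}^{n-1}
  = (∑_{j=0}^{n} g_{2j}(α) g_{2j}(0) ∏_{ℓ=2j}^{2n-1} T_ℓ) · det(c_{i+j})_{i,j=0}^{n-1}`. -/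
theorem hankel_shifted_two_term_dyck_even (T : ℕ → ℝ) (hT : ∀ n, T n ≠ 0)
    (n : ℕ) (hn : 0 < n) (α : ℝ) :
    Matrix.det (Matrix.of fun i j : Fin n =>
        α * dyckGF T (2 * ((i : ℕ) + (j : ℕ) + 1)) 0
          + dyckGF T (2 * ((i : ℕ) + (j : ℕ) + 2)) 0)
      = (∑ j ∈ Finset.range (n + 1),
            gpoly T α (2 * j) * gpoly T 0 (2 * j) * ∏ ℓ ∈ Finset.Ico (2 * j) (2 * n), T ℓ)
        * Matrix.det (Matrix.of fun i j : Fin n =>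
            dyckGF T (2 * ((i : ℕ) + (j : ℕ))) 0) :=
  hankel_shifted_two_term_dyck_even_general T n α
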